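/- Let E and F be nonempty closed convex sets in ℝⁿ. The following are equivalent: (a) E + F = ℝⁿ and for every u ∈ ℝⁿ the metric projections p_E(u) and p_F(u) are orthogonal, i.e., p_E(u) · p_F(u) = 0; (b) E and F are polar cones of each other, i.e., E = F° and F = E°. -/

import Mathlib

open RealInnerProductSpace Pointwise

/-- The (negative) polar set of `X`. -/
def polarSet {H : Type*} [NormedAddCommGroup H] [InnerProductSpace ℝ H] (X : Set H) : Set H :=
  {x | ∀ e ∈ X, ⟪x, e⟫ ≤ 0}

/-- `y` is the metric projection of `u` on `E`: it belongs to `E` and is nearest to `u`. -/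
def IsMetricProj {H : Type*} [NormedAddCommGroup H] [InnerProductSpace ℝ H]
    (E : Set H) (u y : H) : Prop :=
  y ∈ E ∧ ∀ x ∈ E, ‖u - y‖ ≤ ‖u - x‖

/-!
For mutually polar cones, `u = p_E(u) + (u - p_E(u))` is Moreau's orthogonal decomposition,
which gives (a). Conversely, assume (a).
* Writing `u = e + f` and `y = p_E(u)`, `z = p_F(u)`, orthogonality gives
  `0 ≤ ‖u - y - z‖² = ‖u - y‖² + ‖u - z‖² - ‖u‖² ≤ ‖f‖² + ‖e‖² - ‖e + f‖² = -2⟪e, f⟫`,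
  so `E ⊆ F°`.
* A projection is constant along the ray from `p_F(u)` through `u`. Along the ray
  `-t • p_F(0)` the projections on `E` therefore stay orthogonal to `p_F(0)`, which forces
  `-p_F(0) ∈ E°`; decomposing `-p_F(0)` then shows `p_F(0) = 0`, i.e. `0 ∈ F`.
* For `x ∈ F°` and `y = p_E(x)`, the projection on `F` of each point of the ray from `y`
  through `x` is orthogonal to `y`, hence is `0`. So the ray lies in `F°`, i.e. `x - y ∈ F°`,
  and decomposing `x` shows `x = y ∈ E`.
-/

theorem nonpos_of_forall_add_mul_nonpos {a b : ℝ} (h : ∀ t : ℝ, 0 ≤ t → a + t * b ≤ 0) :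
    b ≤ 0 := by
  by_contra! hb
  have := h ((|a| + 1) / b) (by positivity)
  rw [div_mul_cancel₀ _ hb.ne'] at this
  linarith [neg_abs_le a]

section MetricProjection

variable {H : Type*} [NormedAddCommGroup H] [InnerProductSpace ℝ H] {E : Set H} {u y : H}

theorem isMetricProj_of_inner_le_zero (hy : y ∈ E) (h : ∀ w ∈ E, ⟪u - y, w - y⟫ ≤ 0) :
    IsMetricProj E u y := by
  refine ⟨hy, fun w hw => (sq_le_sq₀ (norm_nonneg _) (norm_nonneg _)).1 ?_⟩
  have hw' : u - w = (u - y) - (w - y) := by abel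
  rw [hw', norm_sub_sq_real (u - y)]
  nlinarith [h w hw, sq_nonneg ‖w - y‖]

theorem IsMetricProj.inner_le_zero (hE : Convex ℝ E) (h : IsMetricProj E u y) :
    ∀ w ∈ E, ⟪u - y, w - y⟫ ≤ 0 := by
  have : Nonempty E := ⟨⟨y, h.1⟩⟩
  have hbdd : BddBelow (Set.range fun w : E => ‖u - w‖) :=
    ⟨0, by rintro _ ⟨w, rfl⟩; exact norm_nonneg _⟩
  refine (norm_eq_iInf_iff_real_inner_le_zero hE h.1).1 (le_antisymm ?_ ?_)
  · exact le_ciInf fun w => h.2 w w.2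
  · exact ciInf_le hbdd ⟨y, h.1⟩

theorem exists_isMetricProj [CompleteSpace H] (hne : E.Nonempty) (hcl : IsClosed E)
    (hconv : Convex ℝ E) (u : H) : ∃ y, IsMetricProj E u y := by
  obtain ⟨y, hy, hmin⟩ := exists_norm_eq_iInf_of_complete_convex hne hcl.isComplete hconv u
  exact ⟨y, isMetricProj_of_inner_le_zero hy
    ((norm_eq_iInf_iff_real_inner_le_zero hconv hy).1 hmin)⟩

theorem IsMetricProj.eq (hE : Convex ℝ E) {y' : H} (h : IsMetricProj E u y)
    (h' : IsMetricProj E u y') : y = y' := by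
  have hsum : ⟪y' - y, y' - y⟫ = ⟪u - y, y' - y⟫ + ⟪u - y', y - y'⟫ := by
    simp only [inner_sub_left, inner_sub_right, real_inner_comm]
    ring
  have : ⟪y' - y, y' - y⟫ ≤ 0 := by
    linarith [h.inner_le_zero hE y' h'.1, h'.inner_le_zero hE y h.1]
  exact (sub_eq_zero.1 (real_inner_self_nonpos.1 this)).symm

theorem IsMetricProj.add_smul_sub (hE : Convex ℝ E) (h : IsMetricProj E u y) {t : ℝ}
    (ht : 0 ≤ t) : IsMetricProj E (u + t • (u - y)) y := by
  refine isMetricProj_of_inner_le_zero h.1 fun w hw => ?_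
  rw [show u + t • (u - y) - y = (1 + t) • (u - y) by module, real_inner_smul_left]
  exact mul_nonpos_of_nonneg_of_nonpos (by linarith) (h.inner_le_zero hE w hw)

theorem IsMetricProj.inner_self_le_inner (hE : Convex ℝ E) (h0 : (0 : H) ∈ E)
    (h : IsMetricProj E u y) : ⟪y, y⟫ ≤ ⟪u, y⟫ := by
  have := h.inner_le_zero hE 0 h0
  rw [zero_sub, inner_neg_right, inner_sub_left] at this
  linarith

theorem isMetricProj_zero_iff (hE : Convex ℝ E) (h0 : (0 : H) ∈ E) :
    IsMetricProj E u 0 ↔ u ∈ polarSet E := by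
  refine ⟨fun h w hw => ?_, fun hu => isMetricProj_of_inner_le_zero h0 fun w hw => ?_⟩
  · simpa using h.inner_le_zero hE w hw
  · simpa using hu w hw

end MetricProjection

section Polar

variable {H : Type*} [NormedAddCommGroup H] [InnerProductSpace ℝ H]

theorem convex_polarSet (X : Set H) : Convex ℝ (polarSet X) := by
  intro x hx y hy a b ha hb _ e he
  rw [inner_add_left, real_inner_smul_left, real_inner_smul_left]
  nlinarith [hx e he, hy e he]

theorem zero_mem_polarSet (X : Set H) : (0 : H) ∈ polarSet X := fun e _ => by
  rw [inner_zero_left]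

theorem smul_mem_polarSet {X : Set H} {x : H} (hx : x ∈ polarSet X) {t : ℝ} (ht : 0 ≤ t) :
    t • x ∈ polarSet X := fun e he => by
  rw [real_inner_smul_left]
  exact mul_nonpos_of_nonneg_of_nonpos ht (hx e he)

end Polar

section Characterization

variable {H : Type*} [NormedAddCommGroup H] [InnerProductSpace ℝ H] {E F : Set H}

theorem IsMetricProj.moreau {u y : H} (hEF : E = polarSet F) (hFE : F = polarSet E)
    (h : IsMetricProj E u y) : IsMetricProj F u (u - y) ∧ ⟪y, u - y⟫ = 0 := by
  have hvar := h.inner_le_zero (hEF ▸ convex_polarSet F)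
  have hy : y ∈ polarSet F := hEF ▸ h.1
  have horth : ⟪y, u - y⟫ = 0 := by
    have h0 := hvar 0 (hEF ▸ zero_mem_polarSet F)
    have h2 := hvar ((2 : ℝ) • y) (hEF ▸ smul_mem_polarSet hy zero_le_two)
    rw [zero_sub, inner_neg_right] at h0
    rw [show (2 : ℝ) • y - y = y by module] at h2
    rw [real_inner_comm]
    linarith
  have hz : u - y ∈ F := hFE ▸ fun a ha => by
    have := hvar a ha
    rw [inner_sub_right, real_inner_comm y] at this
    linarith
  refine ⟨isMetricProj_of_inner_le_zero hz fun w hw => ?_, horth⟩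
  rw [sub_sub_cancel, inner_sub_right, horth, sub_zero]
  exact hy w hw

def ProjectionsOrthogonal (E F : Set H) : Prop :=
  ∀ u y z : H, IsMetricProj E u y → IsMetricProj F u z → ⟪y, z⟫ = 0

theorem ProjectionsOrthogonal.symm (h : ProjectionsOrthogonal E F) :
    ProjectionsOrthogonal F E := fun u y z hy hz => by
  rw [real_inner_comm]
  exact h u z y hz hy

theorem ProjectionsOrthogonal.subset_polarSet (horth : ProjectionsOrthogonal E F)
    (hE : ∀ u, ∃ y, IsMetricProj E u y) (hF : ∀ u, ∃ z, IsMetricProj F u z) :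
    E ⊆ polarSet F := by
  intro e he f hf
  obtain ⟨y, hy⟩ := hE (e + f)
  obtain ⟨z, hz⟩ := hF (e + f)
  have hyf : ‖e + f - y‖ ^ 2 ≤ ‖f‖ ^ 2 := by
    gcongr
    simpa using hy.2 e he
  have hze : ‖e + f - z‖ ^ 2 ≤ ‖e‖ ^ 2 := by
    gcongr
    simpa using hz.2 f hf
  have key : ‖e + f - y - z‖ ^ 2 = ‖e + f - y‖ ^ 2 + ‖e + f - z‖ ^ 2 - ‖e + f‖ ^ 2 := by
    rw [norm_sub_sq_real (e + f - y), norm_sub_sq_real (e + f) z, inner_sub_left,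
      horth _ y z hy hz]
    ring
  nlinarith [norm_add_sq_real e f, sq_nonneg ‖e + f - y - z‖]

theorem ProjectionsOrthogonal.neg_mem_polarSet (horth : ProjectionsOrthogonal E F)
    (hE : ∀ u, ∃ y, IsMetricProj E u y) (hFconv : Convex ℝ F) {z₀ : H}
    (hz₀ : IsMetricProj F 0 z₀) : -z₀ ∈ polarSet E := by
  intro a ha
  suffices 2 * ⟪-z₀, a⟫ ≤ 0 by linarith
  refine nonpos_of_forall_add_mul_nonpos (a := -‖a‖ ^ 2) fun t ht => ?_
  have hzt : IsMetricProj F (-(t • z₀)) z₀ := by simpa using hz₀.add_smul_sub hFconv ht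
  obtain ⟨y, hy⟩ := hE (-(t • z₀))
  have hyz : ⟪y, z₀⟫ = 0 := horth _ y z₀ hy hzt
  have hmin : ‖-(t • z₀) - y‖ ^ 2 ≤ ‖-(t • z₀) - a‖ ^ 2 := by
    gcongr
    exact hy.2 a ha
  rw [norm_sub_sq_real, norm_sub_sq_real, inner_neg_left, inner_neg_left, real_inner_smul_left,
    real_inner_smul_left, real_inner_comm, hyz] at hmin
  rw [inner_neg_left]
  nlinarith [sq_nonneg ‖y‖]

theorem ProjectionsOrthogonal.zero_mem_right (horth : ProjectionsOrthogonal E F)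
    (hE : ∀ u, ∃ y, IsMetricProj E u y) (hF : ∀ u, ∃ z, IsMetricProj F u z)
    (hFconv : Convex ℝ F) (hsum : E + F = Set.univ) : (0 : H) ∈ F := by
  obtain ⟨z₀, hz₀⟩ := hF 0
  obtain ⟨e, he, f, hf, hef⟩ := Set.mem_add.1 (hsum ▸ Set.mem_univ (-z₀) : -z₀ ∈ E + F)
  have hze := horth.neg_mem_polarSet hE hFconv hz₀ e he
  have hzf := hz₀.inner_le_zero hFconv f hf
  have : ⟪z₀, z₀⟫ ≤ 0 := by
    have hdecomp : ⟪-z₀, -z₀⟫ = ⟪-z₀, e⟫ + ⟪-z₀, f⟫ := by rw [← inner_add_right, hef]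
    rw [zero_sub, inner_sub_right, inner_neg_left z₀ z₀] at hzf
    rw [inner_neg_neg] at hdecomp
    linarith
  rw [← real_inner_self_nonpos.1 this]
  exact hz₀.1

theorem ProjectionsOrthogonal.sub_mem_polarSet (horth : ProjectionsOrthogonal E F)
    (hEconv : Convex ℝ E) (hF : ∀ u, ∃ z, IsMetricProj F u z) (hFconv : Convex ℝ F)
    (hF0 : (0 : H) ∈ F) {x y : H} (hx : x ∈ polarSet F) (hy : IsMetricProj E x y) :
    x - y ∈ polarSet F := by
  intro f hf
  refine nonpos_of_forall_add_mul_nonpos (a := ⟪x, f⟫) fun t ht => ?_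
  obtain ⟨z, hz⟩ := hF (x + t • (x - y))
  have hyz : ⟪y, z⟫ = 0 := horth _ y z (hy.add_smul_sub hEconv ht) hz
  have hz0 : z = 0 := by
    have h1 := hz.inner_self_le_inner hFconv hF0
    rw [inner_add_left, real_inner_smul_left, inner_sub_left, hyz] at h1
    have h2 := hx z hz.1
    exact real_inner_self_nonpos.1 (by nlinarith)
  have hu := (isMetricProj_zero_iff hFconv hF0).1 (hz0 ▸ hz) f hf
  rwa [inner_add_left, real_inner_smul_left] at hu

theorem ProjectionsOrthogonal.polarSet_subset (horth : ProjectionsOrthogonal E F)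
    (hE : ∀ u, ∃ y, IsMetricProj E u y) (hEconv : Convex ℝ E)
    (hF : ∀ u, ∃ z, IsMetricProj F u z) (hFconv : Convex ℝ F) (hsum : E + F = Set.univ) :
    polarSet F ⊆ E := by
  intro x hx
  obtain ⟨y, hy⟩ := hE x
  obtain ⟨e, he, f, hf, hef⟩ := Set.mem_add.1 (hsum ▸ Set.mem_univ x : x ∈ E + F)
  have hF0 := horth.zero_mem_right hE hF hFconv hsum
  have hvf := horth.sub_mem_polarSet hEconv hF hFconv hF0 hx hy f hf
  have hve := hy.inner_le_zero hEconv e he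
  have : ⟪x - y, x - y⟫ ≤ 0 :=
    calc ⟪x - y, x - y⟫ = ⟪x - y, e - y⟫ + ⟪x - y, f⟫ := by
          rw [← inner_add_right, ← hef, sub_add_eq_add_sub]
      _ ≤ 0 := by linarith
  rw [sub_eq_zero.1 (real_inner_self_nonpos.1 this)]
  exact hy.1

theorem ProjectionsOrthogonal.eq_polarSet (horth : ProjectionsOrthogonal E F)
    (hE : ∀ u, ∃ y, IsMetricProj E u y) (hEconv : Convex ℝ E)
    (hF : ∀ u, ∃ z, IsMetricProj F u z) (hFconv : Convex ℝ F) (hsum : E + F = Set.univ) :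
    E = polarSet F :=
  (horth.subset_polarSet hE hF).antisymm (horth.polarSet_subset hE hEconv hF hFconv hsum)

end Characterization

theorem orthogonal_projections_characterize_polar_cones
    (n : ℕ) (E F : Set (EuclideanSpace ℝ (Fin n)))
    (hEne : E.Nonempty) (hEcl : IsClosed E) (hEconv : Convex ℝ E)
    (hFne : F.Nonempty) (hFcl : IsClosed F) (hFconv : Convex ℝ F) :
    (E + F = Set.univ ∧
      ∀ u y z : EuclideanSpace ℝ (Fin n),
        IsMetricProj E u y → IsMetricProj F u z → ⟪y, z⟫ = 0) ↔
      (E = polarSet F ∧ F = polarSet E) := by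
  have hE := exists_isMetricProj hEne hEcl hEconv
  have hF := exists_isMetricProj hFne hFcl hFconv
  constructor
  · rintro ⟨hsum, horth⟩
    exact ⟨ProjectionsOrthogonal.eq_polarSet horth hE hEconv hF hFconv hsum,
      ProjectionsOrthogonal.eq_polarSet (ProjectionsOrthogonal.symm horth) hF hFconv hE hEconv
        (add_comm E F ▸ hsum)⟩
  · rintro ⟨hEF, hFE⟩
    refine ⟨Set.eq_univ_of_forall fun u => ?_, fun u y z hy hz => ?_⟩
    · obtain ⟨y, hy⟩ := hE u
      exact ⟨y, hy.1, u - y, (hy.moreau hEF hFE).1.1, add_sub_cancel y u⟩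
    · rw [hz.eq hFconv (hy.moreau hEF hFE).1]
      exact (hy.moreau hEF hFE).2
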